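/- arXiv:2402.18090 — 2 statements merged into one kernel-verified Lean document; each statement's English description precedes it below -/
import Mathlib

section
/- Let S be a string with unique first character ♯ and unique last character $. Then the set of minimal rare words for S that are absent from S equals the set of minimal absent words for S; equivalently MRW(S) \ EBF(S) = MAW(S). -/
/-- Number of occurrences of `w` as a substring of `S` (for `w = ε` this is `|S| + 1`). -/
def occ {α : Type*} [DecidableEq α] (S w : List α) : ℕ :=
  (List.range (S.length + 1)).countP
    (fun i => decide (i + w.length ≤ S.length ∧ (S.drop i).take w.length = w))

/-- `aub` is a minimal rare word for `S`. -/
def IsMRW {α : Type*} [DecidableEq α] (S : List α) (a : α) (u : List α) (b : α) : Prop :=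
  occ S (a :: (u ++ [b])) < occ S (a :: u) ∧ occ S (a :: (u ++ [b])) < occ S (u ++ [b])

/-- `aub` is a minimal absent word for `S`. -/
def IsMAW {α : Type*} [DecidableEq α] (S : List α) (a : α) (u : List α) (b : α) : Prop :=
  occ S (a :: (u ++ [b])) = 0 ∧ 1 ≤ occ S (a :: u) ∧ 1 ≤ occ S (u ++ [b])

/-- `aub` is an extended bispecial factor for `S`. -/
def IsEBF {α : Type*} (S : List α) (a : α) (u : List α) (b : α) : Prop :=
  (a :: (u ++ [b])) <:+: S ∧
  (∃ a' : α, a' ≠ a ∧ (a' :: u) <:+: S) ∧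
  (∃ b' : α, b' ≠ b ∧ (u ++ [b']) <:+: S)

/-! If `aub` is a minimal rare word that occurs in `S`, then `occ S (aub) < occ S (au)` yields an
occurrence of `au` that is either a suffix of `S` or followed by some `b' ≠ b`, and symmetrically an
occurrence of `ub` that is a prefix of `S` or preceded by some `a' ≠ a`. The end markers exclude the
suffix and prefix cases: the last letter of a suffix `au` would reappear before the end of `S` in an
occurrence of `aub`, and likewise for the first letter. So `aub` is an extended bispecial factor. A
minimal absent word is rare because it has no occurrence, and for the same reason it is no factor. -/

open List

section Occurrences

variable {α : Type*} [DecidableEq α]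

theorem occ_eq_countP_tails (S w : List α) : occ S w = S.tails.countP (fun t => w <+: t) := by
  have htails : S.tails = (range (S.length + 1)).map S.drop :=
    ext_getElem (by simp) (by simp)
  rw [occ, htails, countP_map]
  refine countP_congr fun i hi => ?_
  rw [mem_range] at hi
  simp only [Function.comp_apply, decide_eq_true_eq, prefix_iff_eq_take (l₂ := S.drop i)]
  constructor
  · exact fun h => h.2.symm
  · intro h
    have hlen := congrArg length h
    simp only [length_take, length_drop] at hlen
    exact ⟨by omega, h.symm⟩

theorem occ_cons_left (x : α) (S w : List α) :
    occ (x :: S) w = occ S w + if w <+: x :: S then 1 else 0 := by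
  simp only [occ_eq_countP_tails, tails_cons, countP_cons, decide_eq_true_eq]

theorem occ_pos_iff {S w : List α} : 0 < occ S w ↔ w <:+: S := by
  simp only [occ_eq_countP_tails, countP_pos_iff, mem_tails, decide_eq_true_eq,
    infix_iff_prefix_suffix, and_comm]

theorem suffix_or_exists_ne_append_infix_of_occ_append_lt {S w : List α} {b : α}
    (h : occ S (w ++ [b]) < occ S w) : w <:+ S ∨ ∃ b' ≠ b, w ++ [b'] <:+: S := by
  by_contra! hne
  refine h.not_ge ?_
  simp only [occ_eq_countP_tails]
  refine countP_mono_left fun t ht hwt => ?_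
  simp only [decide_eq_true_eq, mem_tails] at ht hwt ⊢
  obtain ⟨r, rfl⟩ := hwt
  rcases r with _ | ⟨c, r⟩
  · exact absurd (by simpa using ht) hne.1
  · have hinf : w ++ [c] <:+: S := by
      refine (prefix_append (w ++ [c]) r).isInfix.trans ?_
      simpa using ht.isInfix
    obtain rfl : c = b := by_contra fun hc => hne.2 c hc hinf
    exact ⟨r, by simp⟩

-- The indicator discounts the occurrence of `w` at position `0`, which has no left neighbour.
theorem exists_ne_cons_infix_of_occ_cons_add_lt {S w : List α} {a : α}
    (h : occ S (a :: w) + (if w <+: S then 1 else 0) < occ S w) :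
    ∃ a' ≠ a, a' :: w <:+: S := by
  induction S with
  | nil => simp [occ_eq_countP_tails] at h
  | cons x S ih =>
    have h' : occ S (a :: w) + (if x = a ∧ w <+: S then 1 else 0) < occ S w := by
      simp only [occ_cons_left, cons_prefix_cons, eq_comm (a := a)] at h
      split_ifs at h ⊢ <;> omega
    by_cases hxw : x ≠ a ∧ w <+: S
    · exact ⟨x, hxw.1, (cons_prefix_cons.2 ⟨rfl, hxw.2⟩).isInfix⟩
    · obtain ⟨a', ha', hinf⟩ := ih (by split_ifs at h' ⊢ <;> simp_all)
      exact ⟨a', ha', hinf.trans (suffix_cons x S).isInfix⟩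

theorem prefix_or_exists_ne_cons_infix_of_occ_cons_lt {S w : List α} {a : α}
    (h : occ S (a :: w) < occ S w) : w <+: S ∨ ∃ a' ≠ a, a' :: w <:+: S := by
  by_cases hw : w <+: S
  · exact Or.inl hw
  · exact Or.inr (exists_ne_cons_infix_of_occ_cons_add_lt (by simpa [hw] using h))

end Occurrences

section EndMarkers

variable {α : Type*} [DecidableEq α] {S w : List α}

theorem not_append_singleton_infix_of_suffix (hS : S ≠ []) (hlast : S.count (S.getLast hS) = 1)
    (hw : w ≠ []) (hsuf : w <:+ S) (b : α) : ¬ w ++ [b] <:+: S := by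
  rintro ⟨s, t, hst⟩
  have hsplit : S = (s ++ w) ++ (b :: t) := by rw [← hst]; simp
  have hin_w : S.getLast hS ∈ s ++ w := by
    rw [← hsuf.getLast hw]
    exact mem_append_right s (getLast_mem hw)
  have hin_t : S.getLast hS ∈ b :: t := by
    rw [← IsSuffix.getLast ⟨s ++ w, hsplit.symm⟩ (cons_ne_nil b t)]
    exact getLast_mem _
  have hcount := congrArg (count (S.getLast hS)) hsplit
  rw [count_append] at hcount
  have := count_pos_iff.2 hin_w
  have := count_pos_iff.2 hin_t
  omega

theorem not_cons_infix_of_prefix (hS : S ≠ []) (hfirst : S.count (S.head hS) = 1)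
    (hw : w ≠ []) (hpre : w <+: S) (a : α) : ¬ a :: w <:+: S := by
  have hrev := not_append_singleton_infix_of_suffix (reverse_ne_nil_iff.2 hS)
    (by rwa [getLast_reverse, count_reverse]) (reverse_ne_nil_iff.2 hw) (reverse_suffix.2 hpre) a
  rwa [← reverse_cons, reverse_infix] at hrev

end EndMarkers

theorem mrw_diff_ebf_eq_maw {α : Type*} [DecidableEq α]
    (S : List α) (hS : S ≠ [])
    (hfirst : S.count (S.head hS) = 1)
    (hlast : S.count (S.getLast hS) = 1) :
    ∀ (a b : α) (u : List α),
      (IsMRW S a u b ∧ ¬ IsEBF S a u b) ↔ IsMAW S a u b := by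
  intro a b u
  constructor
  · rintro ⟨⟨hau, hub⟩, hnot⟩
    refine ⟨?_, by omega, by omega⟩
    by_contra habsent
    have haub : a :: (u ++ [b]) <:+: S := occ_pos_iff.1 (Nat.pos_of_ne_zero habsent)
    obtain hsuf | ⟨b', hb', hb'inf⟩ :=
      suffix_or_exists_ne_append_infix_of_occ_append_lt (w := a :: u) hau
    · exact not_append_singleton_infix_of_suffix hS hlast (cons_ne_nil a u) hsuf b haub
    obtain hpre | ⟨a', ha', ha'inf⟩ := prefix_or_exists_ne_cons_infix_of_occ_cons_lt hub
    · exact not_cons_infix_of_prefix hS hfirst (by simp) hpre a haub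
    exact hnot ⟨haub, ⟨a', ha', (prefix_append (a' :: u) [b]).isInfix.trans ha'inf⟩,
      ⟨b', hb', (suffix_cons a (u ++ [b'])).isInfix.trans hb'inf⟩⟩
  · rintro ⟨habsent, hau, hub⟩
    refine ⟨⟨by omega, by omega⟩, fun hebf => ?_⟩
    have := occ_pos_iff.2 hebf.1
    omega
end

section
/- For any string S, the number of minimal absent words for S is at most σ² times the number of maximal repeats of S, where σ is the alphabet size. -/
/-- `u` is a maximal repeat of `S`. -/
def MaximalRepeat {α : Type*} [DecidableEq α] (S u : List α) : Prop :=
  2 ≤ occ S u ∧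
  ((∃ c d : α, c ≠ d ∧ (c :: u) <:+: S ∧ (d :: u) <:+: S) ∨ u <+: S) ∧
  ((∃ c d : α, c ≠ d ∧ (u ++ [c]) <:+: S ∧ (u ++ [d]) <:+: S) ∨ u <:+ S)

/-- The set of minimal absent words for `S`. -/
def MAWset {α : Type*} (S : List α) : Set (List α) :=
  {w | ∃ (a b : α) (u : List α), w = a :: (u ++ [b]) ∧
    ¬ (a :: (u ++ [b])) <:+: S ∧ (a :: u) <:+: S ∧ (u ++ [b]) <:+: S}

section Occurrences

variable {α : Type*} {S u : List α}

lemma occurs_at_length_of_append {s t : List α} (h : s ++ u ++ t = S) :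
    s.length + u.length ≤ S.length ∧ (S.drop s.length).take u.length = u := by
  subst h
  simp

lemma two_le_occ_of_append [DecidableEq α] {s₁ t₁ s₂ t₂ : List α} (h₁ : s₁ ++ u ++ t₁ = S)
    (h₂ : s₂ ++ u ++ t₂ = S) (hne : s₁.length ≠ s₂.length) : 2 ≤ occ S u := by
  have h₁' := occurs_at_length_of_append h₁
  have h₂' := occurs_at_length_of_append h₂
  have hsub : [s₁.length, s₂.length] ⊆ (List.range (S.length + 1)).filter
      fun i => decide (i + u.length ≤ S.length ∧ (S.drop i).take u.length = u) := by
    intro i hi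
    simp only [List.mem_cons, List.not_mem_nil, or_false] at hi
    rcases hi with rfl | rfl <;> simp only [List.mem_filter, List.mem_range] <;>
      exact ⟨by omega, by simpa⟩
  simpa [occ, List.countP_eq_length_filter] using
    (List.subperm_of_subset (by simpa using hne) hsub).length_le

lemma infix_of_occ_pos [DecidableEq α] (h : 0 < occ S u) : u <:+: S := by
  obtain ⟨i, -, hi⟩ := List.countP_pos_iff.1 h
  rw [← (of_decide_eq_true hi).2]
  exact (List.take_prefix _ _).isInfix.trans (List.drop_suffix _ _).isInfix

lemma finite_setOf_maximalRepeat [DecidableEq α] (S : List α) :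
    {u | MaximalRepeat S u}.Finite :=
  S.sublists.finite_toSet.subset fun _ hu =>
    List.mem_sublists.2 (infix_of_occ_pos (by have := hu.1; omega)).sublist

end Occurrences

section MinimalAbsentWords

variable {α : Type*} {S u : List α} {a b : α}

lemma two_le_occ_of_minimal_absent [DecidableEq α] (habs : ¬ a :: (u ++ [b]) <:+: S)
    (hau : a :: u <:+: S) (hub : u ++ [b] <:+: S) : 2 ≤ occ S u := by
  obtain ⟨s, t, hst⟩ := hau
  obtain ⟨p, q, hpq⟩ := hub
  have hst' : s ++ [a] ++ u ++ t = S := by simpa using hst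
  have hpq' : p ++ u ++ b :: q = S := by simpa using hpq
  refine two_le_occ_of_append hst' hpq' fun hlen => habs ⟨s, q, ?_⟩
  -- equal positions force `p = s ++ [a]`, so `a u b` occurs
  have hsplit := hst'.trans hpq'.symm
  rw [List.append_assoc (s ++ [a]), List.append_assoc p] at hsplit
  obtain ⟨rfl, -⟩ := List.append_inj hsplit hlen
  simpa using hpq'

lemma left_maximal_of_minimal_absent (habs : ¬ a :: (u ++ [b]) <:+: S)
    (hau : a :: u <:+: S) (hub : u ++ [b] <:+: S) :
    (∃ c d : α, c ≠ d ∧ c :: u <:+: S ∧ d :: u <:+: S) ∨ u <+: S := by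
  obtain ⟨p, q, hpq⟩ := hub
  rcases List.eq_nil_or_concat p with rfl | ⟨p, c, rfl⟩
  · exact Or.inr ⟨b :: q, by simpa using hpq⟩
  · refine Or.inl ⟨c, a, ?_, ⟨p, b :: q, by simpa using hpq⟩, hau⟩
    rintro rfl
    exact habs ⟨p, q, by simpa using hpq⟩

lemma right_maximal_of_minimal_absent (habs : ¬ a :: (u ++ [b]) <:+: S)
    (hau : a :: u <:+: S) (hub : u ++ [b] <:+: S) :
    (∃ c d : α, c ≠ d ∧ u ++ [c] <:+: S ∧ u ++ [d] <:+: S) ∨ u <:+ S := by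
  obtain ⟨s, t, hst⟩ := hau
  rcases t with _ | ⟨d, t⟩
  · exact Or.inr ⟨s ++ [a], by simpa using hst⟩
  · refine Or.inl ⟨d, b, ?_, ⟨s ++ [a], t, by simpa using hst⟩, hub⟩
    rintro rfl
    exact habs ⟨s, t, by simpa using hst⟩

lemma maximalRepeat_of_minimal_absent [DecidableEq α] (habs : ¬ a :: (u ++ [b]) <:+: S)
    (hau : a :: u <:+: S) (hub : u ++ [b] <:+: S) : MaximalRepeat S u :=
  ⟨two_le_occ_of_minimal_absent habs hau hub, left_maximal_of_minimal_absent habs hau hub,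
    right_maximal_of_minimal_absent habs hau hub⟩

lemma MAWset_subset_image2 [DecidableEq α] (S : List α) :
    MAWset S ⊆ Set.image2 (fun (ab : α × α) u => ab.1 :: (u ++ [ab.2])) Set.univ
      {u | MaximalRepeat S u} := by
  rintro _ ⟨a, b, u, rfl, habs, hau, hub⟩
  exact ⟨(a, b), trivial, u, maximalRepeat_of_minimal_absent habs hau hub, rfl⟩

end MinimalAbsentWords

theorem maw_count_le {α : Type*} [Fintype α] [DecidableEq α] (S : List α) :
    (MAWset S).ncard ≤ Fintype.card α ^ 2 * {u : List α | MaximalRepeat S u}.ncard := by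
  set R := {u : List α | MaximalRepeat S u}
  have hR : R.Finite := finite_setOf_maximalRepeat S
  calc (MAWset S).ncard
      ≤ (Set.image2 (fun (ab : α × α) u => ab.1 :: (u ++ [ab.2])) Set.univ R).ncard :=
        Set.ncard_le_ncard (MAWset_subset_image2 S) (Set.finite_univ.image2 _ hR)
    _ ≤ (Set.univ ×ˢ R).ncard := by
        rw [← Set.image_uncurry_prod]
        exact Set.ncard_image_le (Set.finite_univ.prod hR)
    _ = Fintype.card α ^ 2 * R.ncard := by
        rw [Set.ncard_prod, Set.ncard_univ, Nat.card_eq_fintype_card, Fintype.card_prod, sq]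
end
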